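/- arXiv:2007.14537 — 5 statements merged into one kernel-verified Lean document; each statement's English description precedes it below -/
import Mathlib

section
/- For every positive integer n, S_0(2n) = −L_0(2n) − 2·L_0(n). -/
open ArithmeticFunction
open scoped ArithmeticFunction.Omega

/-- `S₀ x = ∑_{k=1}^{x} (-1)^{k-Ω(k)}`, where `Ω k` is the number of prime
factors of `k` counted with multiplicity. -/
def S0 (x : ℕ) : ℤ :=
  ∑ k ∈ Finset.Icc 1 x, (-1 : ℤ) ^ (k - Ω k)

/-- `L₀ x = ∑_{k=1}^{x} (-1)^{Ω(k)}`, the summatory Liouville function. -/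
def L0 (x : ℕ) : ℤ :=
  ∑ k ∈ Finset.Icc 1 x, (-1 : ℤ) ^ (Ω k)

/-! Since `Ω k ≤ k`, the summand of `S₀` is `(-1)^k λ(k)`: odd `k` contribute `-λ(k)`, and even
`k = 2j` contribute `λ(2j) = -λ(j)`. -/

namespace ArithmeticFunction

theorem two_pow_cardFactors_le {n : ℕ} (hn : n ≠ 0) : 2 ^ Ω n ≤ n := by
  conv_rhs => rw [← Nat.prod_primeFactorsList hn]
  rw [cardFactors_apply]
  exact List.pow_card_le_prod _ _ fun p hp => (Nat.prime_of_mem_primeFactorsList hp).two_le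

theorem cardFactors_le_self (n : ℕ) : Ω n ≤ n := by
  rcases eq_or_ne n 0 with rfl | hn
  · simp
  · exact (Nat.lt_two_pow_self).le.trans (two_pow_cardFactors_le hn)

theorem neg_one_pow_sub_cardFactors (k : ℕ) :
    (-1 : ℤ) ^ (k - Ω k) = (-1) ^ k * (-1) ^ Ω k := by
  have hle := cardFactors_le_self k
  generalize Ω k = a at hle ⊢
  obtain ⟨j, rfl⟩ := Nat.exists_eq_add_of_le hle
  rw [Nat.add_sub_cancel_left, pow_add, mul_right_comm, ← pow_add, ← two_mul, pow_mul,
    neg_one_sq, one_pow, one_mul]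

theorem neg_one_pow_cardFactors_two_mul {m : ℕ} (hm : m ≠ 0) :
    (-1 : ℤ) ^ Ω (2 * m) = -(-1) ^ Ω m := by
  rw [cardFactors_mul two_ne_zero hm, cardFactors_apply_prime Nat.prime_two, pow_add, pow_one,
    neg_one_mul]

end ArithmeticFunction

theorem S0_succ (x : ℕ) : S0 (x + 1) = S0 x + (-1) ^ (x + 1 - Ω (x + 1)) :=
  Finset.sum_Icc_succ_top (Nat.le_add_left 1 x) _

theorem L0_succ (x : ℕ) : L0 (x + 1) = L0 x + (-1) ^ Ω (x + 1) :=
  Finset.sum_Icc_succ_top (Nat.le_add_left 1 x) _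

theorem S0_eq_neg_L0_general (n : ℕ) : S0 (2 * n) = -L0 (2 * n) - 2 * L0 n := by
  induction n with
  | zero => rfl
  | succ n ih =>
    have hodd : (-1 : ℤ) ^ (2 * n + 1 - Ω (2 * n + 1)) = -(-1) ^ Ω (2 * n + 1) := by
      rw [neg_one_pow_sub_cardFactors, (odd_two_mul_add_one n).neg_one_pow, neg_one_mul]
    have heven : (-1 : ℤ) ^ Ω (2 * (n + 1)) = -(-1) ^ Ω (n + 1) :=
      neg_one_pow_cardFactors_two_mul n.succ_ne_zero
    have heven' : (-1 : ℤ) ^ (2 * (n + 1) - Ω (2 * (n + 1))) = -(-1) ^ Ω (n + 1) := by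
      rw [neg_one_pow_sub_cardFactors, (even_two_mul _).neg_one_pow, one_mul, heven]
    rw [show 2 * (n + 1) = 2 * n + 1 + 1 by ring] at heven heven' ⊢
    rw [S0_succ, S0_succ, L0_succ, L0_succ, L0_succ, ih, hodd, heven, heven']
    ring

theorem S0_eq_neg_L0 (n : ℕ) (hn : 0 < n) : S0 (2 * n) = -L0 (2 * n) - 2 * L0 n :=
  S0_eq_neg_L0_general n
end

section
/- For every complex number s with Re s > 1, the series ∑_{n=1}^{∞} (−1)^{n−Ω(n)} n^{−s} converges absolutely and ∑_{n=1}^{∞} (−1)^{n−Ω(n)} n^{−s} = −(1 + 2^{1−s})·ζ(2s)/ζ(s). -/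
open ArithmeticFunction Complex
open scoped ArithmeticFunction.Omega

/-!
Writing `λ(n) = (-1)^Ω(n)` for the Liouville function, the coefficients are `(-1)^n λ(n)`.
The Euler product of the completely multiplicative `λ(n) n^{-s}` has factors `(1 + p^{-s})⁻¹`,
which multiply those of `ζ(s)` to those of `ζ(2s)`; hence `∑ λ(n) n^{-s} = ζ(2s)/ζ(s)`.
Twisting by `(-1)^n` flips the sign of the odd terms, so the series equals twice its even part
minus the whole sum, and the even part is `λ(2) 2^{-s} = -2^{-s}` times the whole sum.
-/

lemma ArithmeticFunction.cardFactors_le_self_s13 (n : ℕ) : Ω n ≤ n := by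
  rcases eq_or_ne n 0 with rfl | hn
  · simp
  have h2 : 2 ^ n.primeFactorsList.length ≤ n.primeFactorsList.prod :=
    List.pow_card_le_prod _ _ fun p hp => (Nat.prime_of_mem_primeFactorsList hp).two_le
  rw [Nat.prod_primeFactorsList hn] at h2
  rw [cardFactors_apply]
  exact Nat.lt_two_pow_self.le.trans h2

lemma neg_one_pow_sub_of_le {R : Type*} [Monoid R] [HasDistribNeg R] {m n : ℕ} (h : m ≤ n) :
    (-1 : R) ^ (n - m) = (-1) ^ n * (-1) ^ m := by
  rw [← pow_sub_mul_pow (-1 : R) h, mul_assoc, ← pow_add, ← two_mul, pow_mul, neg_one_sq,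
    one_pow, mul_one]

lemma tsum_neg_one_pow_mul_eq {R : Type*} [NormedRing R] [CompleteSpace R] {f : ℕ → R}
    (hf : Summable f) : ∑' n, (-1) ^ n * f n = 2 * ∑' k, f (2 * k) - ∑' n, f n := by
  have he : Summable fun k => f (2 * k) := hf.comp_injective (mul_right_injective₀ two_ne_zero)
  have ho : Summable fun k => f (2 * k + 1) :=
    hf.comp_injective fun a b h => by simpa using h
  have h_even : (fun k => (-1) ^ (2 * k) * f (2 * k)) = fun k => f (2 * k) := by
    funext k; rw [pow_mul, neg_one_sq, one_pow, one_mul]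
  have h_odd : (fun k => (-1) ^ (2 * k + 1) * f (2 * k + 1)) = fun k => -f (2 * k + 1) := by
    funext k; rw [pow_succ, pow_mul, neg_one_sq, one_pow, one_mul, neg_one_mul]
  rw [← tsum_even_add_odd (h_even ▸ he) (h_odd ▸ ho.neg), h_even, h_odd, tsum_neg,
    ← tsum_even_add_odd he ho, two_mul]
  abel

lemma summable_norm_neg_one_pow_div_natCast_cpow (e : ℕ → ℕ) {s : ℂ} (hs : 1 < s.re) :
    Summable fun n : ℕ => ‖(-1 : ℂ) ^ e n / (n : ℂ) ^ s‖ := by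
  have hs0 : s.re ≠ 0 := by positivity
  simpa [norm_natCast_cpow_of_re_ne_zero _ hs0] using Real.summable_one_div_nat_rpow.mpr hs

noncomputable def liouvilleSummandHom {s : ℂ} (hs : s ≠ 0) : ℕ →*₀ ℂ where
  toFun n := (-1) ^ Ω n / (n : ℂ) ^ s
  map_zero' := by simp [zero_cpow hs]
  map_one' := by simp
  map_mul' m n := by
    rcases eq_or_ne m 0 with rfl | hm
    · simp [zero_cpow hs]
    rcases eq_or_ne n 0 with rfl | hn
    · simp [zero_cpow hs]
    rw [cardFactors_mul hm hn, Nat.cast_mul, natCast_mul_natCast_cpow, pow_add, mul_div_mul_comm]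

@[simp]
lemma liouvilleSummandHom_apply {s : ℂ} (hs : s ≠ 0) (n : ℕ) :
    liouvilleSummandHom hs n = (-1) ^ Ω n / (n : ℂ) ^ s :=
  rfl

lemma liouvilleSummandHom_prime {s : ℂ} (hs : s ≠ 0) {p : ℕ} (hp : p.Prime) :
    liouvilleSummandHom hs p = -(p : ℂ) ^ (-s) := by
  simp [cardFactors_apply_prime hp, cpow_neg, div_eq_mul_inv]

lemma tsum_liouvilleSummandHom {s : ℂ} (hs : 1 < s.re) :
    ∑' n, liouvilleSummandHom (ne_zero_of_one_lt_re hs) n =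
      riemannZeta (2 * s) / riemannZeta s := by
  have hL : HasProd (fun p : Nat.Primes => (1 + (p : ℂ) ^ (-s))⁻¹)
      (∑' n, liouvilleSummandHom (ne_zero_of_one_lt_re hs) n) := by
    convert EulerProduct.eulerProduct_completely_multiplicative_hasProd
      (f := liouvilleSummandHom (ne_zero_of_one_lt_re hs))
      (summable_norm_neg_one_pow_div_natCast_cpow Ω hs) using 1
    funext p
    rw [liouvilleSummandHom_prime _ p.prop, sub_neg_eq_add]
  have hfactor (p : Nat.Primes) :
      (1 + (p : ℂ) ^ (-s))⁻¹ * (1 - (p : ℂ) ^ (-s))⁻¹ = (1 - (p : ℂ) ^ (-(2 * s)))⁻¹ := by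
    rw [← mul_inv, neg_mul_eq_mul_neg, cpow_ofNat_mul]
    ring
  have h2s : 1 < (2 * s).re := by
    simp only [mul_re, re_ofNat, im_ofNat, zero_mul, sub_zero]; linarith
  have hprod := hL.mul (riemannZeta_eulerProduct_hasProd hs)
  simp only [hfactor] at hprod
  exact eq_div_of_mul_eq (riemannZeta_ne_zero_of_one_lt_re hs)
    (hprod.unique (riemannZeta_eulerProduct_hasProd h2s))

theorem dirichlet_series_S (s : ℂ) (hs : 1 < s.re) :
    Summable (fun n : ℕ => ‖(-1 : ℂ) ^ (n - Ω n) / (n : ℂ) ^ s‖) ∧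
    ∑' n : ℕ, (-1 : ℂ) ^ (n - Ω n) / (n : ℂ) ^ s =
      -(1 + 2 ^ (1 - s)) * riemannZeta (2 * s) / riemannZeta s := by
  refine ⟨summable_norm_neg_one_pow_div_natCast_cpow _ hs, ?_⟩
  have hs0 : s ≠ 0 := ne_zero_of_one_lt_re hs
  have hterm (n : ℕ) :
      (-1 : ℂ) ^ (n - Ω n) / (n : ℂ) ^ s = (-1) ^ n * liouvilleSummandHom hs0 n := by
    rw [neg_one_pow_sub_of_le (cardFactors_le_self_s13 n), mul_div_assoc, liouvilleSummandHom_apply]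
  have htwo : liouvilleSummandHom hs0 2 = -1 / 2 ^ s := by
    simp [cardFactors_apply_prime Nat.prime_two]
  rw [tsum_congr hterm, tsum_neg_one_pow_mul_eq (f := liouvilleSummandHom hs0)
    (summable_norm_neg_one_pow_div_natCast_cpow Ω hs).of_norm]
  simp only [map_mul, tsum_mul_left, htwo]
  rw [tsum_liouvilleSummandHom hs, cpow_sub _ _ two_ne_zero, cpow_one]
  ring
end

section
/- For every complex number s with Re s > 1, the series ∑_{n=1}^{∞} (−1)^{ω(n)} n^{−s} converges absolutely, the product ∏_{p prime} (1 − 2p^{−s}) converges (is multipliable), and ∑_{n=1}^{∞} (−1)^{ω(n)} n^{−s} = ζ(s) · ∏_{p prime} (1 − 2p^{−s}). -/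
/-!
Since `ω` is additive on coprime arguments, `n ↦ (-1)^ω(n) n^(-s)` is multiplicative, and its
local factor at a prime `p` is `1 - ∑_{e ≥ 1} p^(-es) = (1 - 2p^(-s)) / (1 - p^(-s))`. Its Euler
product is therefore the Euler product of `ζ` times `∏ (1 - 2p^(-s))`, and the latter product
converges because `∑ ‖p^(-s)‖` does.
-/

open ArithmeticFunction Complex
open scoped ArithmeticFunction.omega

lemma Summable.multipliable_one_sub_mul_primes {R : Type*} [NormedCommRing R] [NormOneClass R]
    [CompleteSpace R] {f : ℕ → R} (hf : Summable (‖f ·‖)) (c : R) :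
    Multipliable fun p : Nat.Primes => 1 - c * f p := by
  simp_rw [sub_eq_add_neg]
  refine multipliable_one_add_of_summable <|
    ((hf.comp_injective Subtype.val_injective).mul_left ‖c‖).of_nonneg_of_le
      (fun _ => norm_nonneg _) fun p => ?_
  exact (norm_neg _).trans_le (norm_mul_le c (f p))

lemma neg_one_pow_cardDistinctFactors_mul_map_mul {R : Type*} [CommRing R] (g : ℕ →*₀ R)
    {m n : ℕ} (h : m.Coprime n) :
    (-1 : R) ^ ω (m * n) * g (m * n) = (-1) ^ ω m * g m * ((-1) ^ ω n * g n) := by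
  rw [cardDistinctFactors_mul h, pow_add, map_mul]
  ring

section EulerProduct

variable {K : Type*} [NormedField K] [CompleteSpace K]

lemma tsum_neg_one_pow_cardDistinctFactors_prime_pow_mul_pow {p : ℕ} (hp : p.Prime) {z : K}
    (hz : ‖z‖ < 1) :
    ∑' e : ℕ, (-1 : K) ^ ω (p ^ e) * z ^ e = (1 - 2 * z) / (1 - z) := by
  have hsum : Summable fun e : ℕ => (-1 : K) ^ ω (p ^ e) * z ^ e :=
    .of_norm <| (summable_geometric_of_lt_one (norm_nonneg z) hz).congr fun e => by simp
  have hz1 : 1 - z ≠ 0 := sub_ne_zero.mpr fun h => by simp [← h] at hz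
  have htail : ∀ e : ℕ, (-1 : K) ^ ω (p ^ (e + 1)) * z ^ (e + 1) = -z * z ^ e := fun e => by
    rw [cardDistinctFactors_apply_prime_pow hp e.succ_ne_zero, pow_succ']
    ring
  rw [hsum.tsum_eq_zero_add, tsum_congr htail, tsum_mul_left, tsum_geometric_of_norm_lt_one hz,
    pow_zero, cardDistinctFactors_one, pow_zero, pow_zero]
  field_simp
  ring

variable (g : ℕ →*₀ K)

lemma hasProd_one_sub_two_mul_div_one_sub (hg : Summable (‖g ·‖)) :
    HasProd (fun p : Nat.Primes => (1 - 2 * g p) / (1 - g p)) (∑' n, (-1 : K) ^ ω n * g n) := by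
  have hsum : Summable fun n => ‖(-1 : K) ^ ω n * g n‖ := hg.congr fun n => by simp
  convert EulerProduct.eulerProduct_hasProd (by simp)
    (neg_one_pow_cardDistinctFactors_mul_map_mul g) hsum (by simp) with p
  simp_rw [map_pow]
  exact (tsum_neg_one_pow_cardDistinctFactors_prime_pow_mul_pow p.prop
    (hg.of_norm.norm_lt_one (f := (g : ℕ →* K)) p.prop.one_lt)).symm

theorem tsum_neg_one_pow_cardDistinctFactors_mul (hg : Summable (‖g ·‖)) :
    ∑' n, (-1 : K) ^ ω n * g n = (∑' n, g n) * ∏' p : Nat.Primes, (1 - 2 * g p) := by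
  have hζ := EulerProduct.eulerProduct_completely_multiplicative_hasProd hg
  rw [← (hasProd_one_sub_two_mul_div_one_sub g hg).tprod_eq, ← hζ.tprod_eq, mul_comm,
    ← (hg.multipliable_one_sub_mul_primes 2).tprod_mul hζ.multipliable]
  simp_rw [div_eq_mul_inv]

end EulerProduct

theorem dirichlet_series_H (s : ℂ) (hs : 1 < s.re) :
    Summable (fun n : ℕ => ‖(-1 : ℂ) ^ (ω n) / (n : ℂ) ^ s‖) ∧
    Multipliable (fun p : Nat.Primes => 1 - 2 * ((p : ℕ) : ℂ) ^ (-s)) ∧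
    ∑' n : ℕ, (-1 : ℂ) ^ (ω n) / (n : ℂ) ^ s =
      riemannZeta s * ∏' p : Nat.Primes, (1 - 2 * ((p : ℕ) : ℂ) ^ (-s)) := by
  let g := riemannZetaSummandHom (ne_zero_of_one_lt_re hs)
  have hg : Summable (‖g ·‖) := summable_riemannZetaSummand hs
  have hterm : ∀ n : ℕ, (-1 : ℂ) ^ ω n / (n : ℂ) ^ s = (-1) ^ ω n * g n := fun n => by
    rw [div_eq_mul_inv, ← cpow_neg]
    rfl
  simp_rw [hterm]
  refine ⟨hg.congr fun n => by simp, hg.multipliable_one_sub_mul_primes 2, ?_⟩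
  rw [tsum_neg_one_pow_cardDistinctFactors_mul g hg, tsum_riemannZetaSummand hs]
  rfl
end

section
/- Define, for complex s, the Euler product F_6(s) = ∏_{p prime} (1−2p^{−s})·(1−p^{−s})^{−2}·(1−p^{−2s})^{−1}·(1−p^{−3s})^{−2}·(1−p^{−4s})^{−3}·(1−p^{−5s})^{−6}·(1−p^{−6s})^{−9}. Then the product defining F_6(s) converges (is multipliable) for every complex s with Re s > 1/7, and for every complex s with Re s > 1 one has (∑_{n=1}^{∞} (−1)^{ω(n)} n^{−s}) · ζ(s)·ζ(2s)·ζ(3s)²·ζ(4s)³·ζ(5s)⁶·ζ(6s)⁹ = F_6(s). -/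
open ArithmeticFunction
open scoped ArithmeticFunction.omega

/-- The factor at the prime `p` in the Euler product defining `F₆(s)`. -/
noncomputable def F6Term (s : ℂ) (p : Nat.Primes) : ℂ :=
  (1 - 2 * ((p : ℕ) : ℂ) ^ (-s)) *
    ((1 - ((p : ℕ) : ℂ) ^ (-s)) ^ 2)⁻¹ *
    (1 - ((p : ℕ) : ℂ) ^ (-(2 * s)))⁻¹ *
    ((1 - ((p : ℕ) : ℂ) ^ (-(3 * s))) ^ 2)⁻¹ *
    ((1 - ((p : ℕ) : ℂ) ^ (-(4 * s))) ^ 3)⁻¹ *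
    ((1 - ((p : ℕ) : ℂ) ^ (-(5 * s))) ^ 6)⁻¹ *
    ((1 - ((p : ℕ) : ℂ) ^ (-(6 * s))) ^ 9)⁻¹

/-!
Write `x = p ^ (-s)`. The factor of `F₆` at `p` is `(1 - 2x) / D(x)` with
`D(x) = (1-x)²(1-x²)(1-x³)²(1-x⁴)³(1-x⁵)⁶(1-x⁶)⁹`, and the exponents in `D` are chosen so
that `D(x) ≡ 1 - 2x mod x⁷`. So the factor is `1 + O(|x|⁷) = 1 + O(p ^ (-7 Re s))`, which is
summable over the primes once `Re s > 1/7`.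

For `Re s > 1` the function `n ↦ (-1) ^ ω(n) n ^ (-s)` is multiplicative with local factor
`∑ₑ (-1) ^ ω(pᵉ) xᵉ = 1 - x - x² - ⋯ = (1 - 2x) / (1 - x)`, and multiplying its Euler product
with those of the zeta factors gives `(1 - 2x) / D(x)` prime by prime.
-/

open Filter Topology Asymptotics Complex

noncomputable def F6Denom (x : ℂ) : ℂ :=
  (1 - x) ^ 2 * (1 - x ^ 2) * (1 - x ^ 3) ^ 2 * (1 - x ^ 4) ^ 3 * (1 - x ^ 5) ^ 6 * (1 - x ^ 6) ^ 9

/-- The coefficient list `l` starts with the constant term. -/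
noncomputable def hornerEval (l : List ℤ) (x : ℂ) : ℂ :=
  l.foldr (fun (c : ℤ) (acc : ℂ) ↦ (c : ℂ) + x * acc) 0

theorem continuous_hornerEval (l : List ℤ) : Continuous (hornerEval l) := by
  induction l with
  | nil => exact continuous_const
  | cons c l ih => exact continuous_const.add (continuous_id.mul ih)

def F6Cofactor : List ℤ :=
  [-18, 6, 4, 13, 12, 37, 40, -72, -58, -109, -66, -102, 144, 363, 296, 311, -6, -242, -1040,
   -951, -638, -29, 984, 1865, 2570, 1119, 36, -2118, -3594, -4369, -2752, 729, 3076, 6268, 6294,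
   4645, -854, -5034, -7920, -9027, -5400, -102, 6918, 9036, 10214, 6422, 0, -6422, -10214,
   -9036, -6918, 102, 5400, 9027, 7920, 5034, 854, -4645, -6294, -6268, -3076, -729, 2752, 4369,
   3594, 2118, -36, -1119, -2570, -1865, -984, 29, 638, 951, 1040, 242, 6, -311, -296, -363,
   -144, 102, 66, 109, 58, 72, -40, -37, -12, -13, -4, -6, 18, 0, 0, 0, 0, 0, -2, 1]

set_option maxRecDepth 10000 in
theorem one_sub_two_mul_sub_F6Denom (x : ℂ) :
    1 - 2 * x - F6Denom x = x ^ 7 * hornerEval F6Cofactor x := by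
  unfold F6Denom hornerEval F6Cofactor
  simp only [List.foldr_cons, List.foldr_nil]
  push_cast
  ring

theorem isBigO_div_F6Denom_sub_one :
    (fun x ↦ (1 - 2 * x) / F6Denom x - 1) =O[𝓝 0] fun x ↦ x ^ 7 := by
  have hD : Continuous F6Denom := by unfold F6Denom; fun_prop
  have hD₀ : F6Denom 0 ≠ 0 := by norm_num [F6Denom]
  have hcofactor : (fun x ↦ hornerEval F6Cofactor x / F6Denom x) =O[𝓝 0] fun _ ↦ (1 : ℂ) :=
    ((continuous_hornerEval _).continuousAt.div hD.continuousAt hD₀).isBigO_one ℂ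
  refine ((isBigO_refl _ _).mul hcofactor).congr' ?_ (.of_forall fun x ↦ mul_one _)
  filter_upwards [hD.continuousAt.eventually_ne hD₀] with x hx
  rw [mul_div_assoc', ← one_sub_two_mul_sub_F6Denom]
  field_simp

theorem F6Term_eq_div (s : ℂ) (p : Nat.Primes) :
    F6Term s p = (1 - 2 * ((p : ℕ) : ℂ) ^ (-s)) / F6Denom (((p : ℕ) : ℂ) ^ (-s)) := by
  simp only [F6Term, F6Denom, ← cpow_nat_mul, Nat.cast_ofNat, mul_neg]
  field_simp

theorem tendsto_primes_cpow_neg_cofinite {s : ℂ} (hs : 0 < s.re) :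
    Tendsto (fun p : Nat.Primes ↦ ((p : ℕ) : ℂ) ^ (-s)) cofinite (𝓝 0) := by
  rw [tendsto_zero_iff_norm_tendsto_zero]
  have hp : Tendsto (fun p : Nat.Primes ↦ ((p : ℕ) : ℝ)) cofinite atTop :=
    tendsto_natCast_atTop_atTop.comp
      (Nat.cofinite_eq_atTop ▸ Subtype.val_injective.tendsto_cofinite)
  refine ((tendsto_rpow_neg_atTop hs).comp hp).congr fun p ↦ ?_
  simp [norm_natCast_cpow_of_pos p.prop.pos]

theorem summable_F6Term_sub_one {s : ℂ} (hs : 1 / 7 < s.re) :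
    Summable fun p : Nat.Primes ↦ F6Term s p - 1 := by
  have hO := (isBigO_div_F6Denom_sub_one.comp_tendsto
    (tendsto_primes_cpow_neg_cofinite (s := s) (by linarith))).norm_right
  simp only [Function.comp_def, ← F6Term_eq_div] at hO
  refine summable_of_isBigO ((Nat.Primes.summable_rpow (r := -s.re * 7)).mpr (by linarith)
    |>.congr fun p ↦ ?_) hO
  rw [norm_pow, norm_natCast_cpow_of_pos p.prop.pos, neg_re,
    ← Real.rpow_mul_natCast (Nat.cast_nonneg _), Nat.cast_ofNat]

theorem multipliable_F6Term {s : ℂ} (hs : 1 / 7 < s.re) : Multipliable (F6Term s) := by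
  simpa using Complex.multipliable_one_add_of_summable (summable_F6Term_sub_one hs)

theorem hasSum_negOnePow_cardDistinctFactors_prime_pow {p : ℕ} (hp : p.Prime) {x : ℂ}
    (hx : ‖x‖ < 1) :
    HasSum (fun e ↦ (-1 : ℂ) ^ ω (p ^ e) * x ^ e) ((1 - 2 * x) / (1 - x)) := by
  have hx₁ : 1 - x ≠ 0 := sub_ne_zero.mpr fun h ↦ by simp [← h] at hx
  have h := (hasSum_ite_eq 0 (2 : ℂ)).sub (hasSum_geometric_of_norm_lt_one hx)
  rw [show (2 : ℂ) - (1 - x)⁻¹ = (1 - 2 * x) / (1 - x) by field_simp; ring] at h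
  refine h.congr_fun fun e ↦ ?_
  rcases eq_or_ne e 0 with rfl | he
  · norm_num
  · simp [he, cardDistinctFactors_apply_prime_pow hp he]

theorem hasProd_tsum_negOnePow_cardDistinctFactors_div_cpow {s : ℂ} (hs : 1 < s.re) :
    HasProd (fun p : Nat.Primes ↦ (1 - 2 * ((p : ℕ) : ℂ) ^ (-s)) / (1 - ((p : ℕ) : ℂ) ^ (-s)))
      (∑' n : ℕ, (-1 : ℂ) ^ ω n / (n : ℂ) ^ s) := by
  have hsum : Summable fun n : ℕ ↦ ‖(-1 : ℂ) ^ ω n / (n : ℂ) ^ s‖ :=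
    (summable_one_div_nat_cpow.mpr hs).norm.congr fun n ↦ by simp
  refine (EulerProduct.eulerProduct_hasProd (by simp) (fun {m n} hmn ↦ ?_) hsum
    (by simp [zero_cpow (ne_zero_of_one_lt_re hs)])).congr_fun fun p ↦ ?_
  · rw [cardDistinctFactors_mul hmn, pow_add, Nat.cast_mul, natCast_mul_natCast_cpow,
      mul_div_mul_comm]
  · refine ((hasSum_negOnePow_cardDistinctFactors_prime_pow p.prop ?_).congr_fun
      fun e ↦ ?_).tsum_eq.symm
    · rw [norm_natCast_cpow_of_pos p.prop.pos, neg_re]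
      exact Real.rpow_lt_one_of_one_lt_of_neg (mod_cast p.prop.one_lt) (by linarith)
    · rw [div_eq_mul_inv, ← cpow_neg, Nat.cast_pow, ← natCast_cpow_natCast_mul, cpow_nat_mul]

theorem F6_multipliable_and_identity :
    (∀ s : ℂ, 1 / 7 < s.re → Multipliable (F6Term s)) ∧
    (∀ s : ℂ, 1 < s.re →
      (∑' n : ℕ, (-1 : ℂ) ^ (ω n) / (n : ℂ) ^ s) *
        (riemannZeta s * riemannZeta (2 * s) * riemannZeta (3 * s) ^ 2 *
          riemannZeta (4 * s) ^ 3 * riemannZeta (5 * s) ^ 6 * riemannZeta (6 * s) ^ 9) =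
        ∏' p : Nat.Primes, F6Term s p) := by
  refine ⟨fun s ↦ multipliable_F6Term, fun s hs ↦ ?_⟩
  have hζ (k : ℕ) (hk : 1 ≤ k) := riemannZeta_eulerProduct_hasProd (s := k * s) <| by
    simpa using one_lt_mul_of_le_of_lt (Nat.one_le_cast.mpr hk) hs
  have H := (hasProd_tsum_negOnePow_cardDistinctFactors_div_cpow hs).mul
    (riemannZeta_eulerProduct_hasProd hs) |>.mul (hζ 2 one_le_two)
    |>.mul ((hζ 3 (by norm_num)).pow 2) |>.mul ((hζ 4 (by norm_num)).pow 3)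
    |>.mul ((hζ 5 (by norm_num)).pow 6) |>.mul ((hζ 6 (by norm_num)).pow 9)
  simp only [Nat.cast_ofNat] at H
  rw [(H.congr_fun fun p ↦ ?_).tprod_eq]
  · ring
  · simp only [F6Term, ← inv_pow]
    ring
end

section
/- For every complex number s with Re s > 1, the series ∑_{n=1}^{∞} (−2)^{Ω(n)} n^{−s} converges absolutely, the product ∏_{p prime} (1 + 2p^{−s})^{−1} converges (is multipliable), and ∑_{n=1}^{∞} (−2)^{Ω(n)} n^{−s} = ∏_{p prime} (1 + 2p^{−s})^{−1}. -/
/-!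
The coefficients `(-2)^Ω(n) n^(-s)` form a completely multiplicative function, so the claim is
the Euler product for completely multiplicative functions as soon as the series converges
absolutely. For that, the majorant `2^Ω(n) n^(-σ)`, `σ = Re s`, is again completely
multiplicative: its partial sums up to `N` are bounded by its sum over `N`-smooth numbers, that is
by `∏_{p<N} (1 - 2p^(-σ))⁻¹`. Since `2p^(-σ) ≤ 2^(1-σ) < 1`, each factor is at most
`exp (2p^(-σ) / (1 - 2^(1-σ)))`, and `∑_p p^(-σ)` converges.
-/

open ArithmeticFunction Complex EulerProduct Finset
open scoped ArithmeticFunction.Omega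

lemma inv_one_sub_le_exp_div {x a : ℝ} (hx : 0 ≤ x) (hxa : x ≤ a) (ha : a < 1) :
    (1 - x)⁻¹ ≤ Real.exp (x / (1 - a)) := by
  have hx1 : 0 < 1 - x := by linarith
  calc (1 - x)⁻¹ = 1 + x / (1 - x) := by field_simp; ring
    _ ≤ 1 + x / (1 - a) := by gcongr
    _ ≤ Real.exp (x / (1 - a)) := by linarith [Real.add_one_le_exp (x / (1 - a))]

lemma sum_primesBelow_le_tsum_primes {f : ℕ → ℝ} (hf₀ : ∀ p : Nat.Primes, 0 ≤ f p)
    (hsum : Summable fun p : Nat.Primes ↦ f p) (N : ℕ) :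
    ∑ p ∈ N.primesBelow, f p ≤ ∑' p : Nat.Primes, f p := by
  rw [← sum_preimage ((↑) : Nat.Primes → ℕ) N.primesBelow Subtype.val_injective.injOn f
    fun p hp hp' ↦ (hp' ⟨⟨p, Nat.prime_of_mem_primesBelow hp⟩, rfl⟩).elim]
  -- without `L`, the `NeBot` instance is searched for before `hsum` fixes the summation filter
  exact Summable.sum_le_tsum (L := SummationFilter.unconditional _) _ (fun p _ ↦ hf₀ p) hsum

lemma prod_primesBelow_inv_one_sub_le_exp {f : ℕ → ℝ} {a : ℝ} (ha : a < 1)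
    (hf₀ : ∀ p : Nat.Primes, 0 ≤ f p) (hfa : ∀ p : Nat.Primes, f p ≤ a)
    (hsum : Summable fun p : Nat.Primes ↦ f p) (N : ℕ) :
    ∏ p ∈ N.primesBelow, (1 - f p)⁻¹ ≤ Real.exp ((∑' p : Nat.Primes, f p) / (1 - a)) := by
  have hprime {p} (hp : p ∈ N.primesBelow) : p.Prime := Nat.prime_of_mem_primesBelow hp
  calc ∏ p ∈ N.primesBelow, (1 - f p)⁻¹
      ≤ ∏ p ∈ N.primesBelow, Real.exp (f p / (1 - a)) := by
        refine prod_le_prod (fun p hp ↦ ?_) fun p hp ↦ ?_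
        · exact inv_nonneg.mpr (by linarith [hfa ⟨p, hprime hp⟩])
        · exact inv_one_sub_le_exp_div (hf₀ ⟨p, hprime hp⟩) (hfa ⟨p, hprime hp⟩) ha
    _ = Real.exp ((∑ p ∈ N.primesBelow, f p) / (1 - a)) := by rw [← Real.exp_sum, sum_div]
    _ ≤ Real.exp ((∑' p : Nat.Primes, f p) / (1 - a)) := by
        gcongr
        exact sum_primesBelow_le_tsum_primes hf₀ hsum N

lemma sum_range_le_prod_primesBelow_inv_one_sub {f : ℕ →*₀ ℝ} (hf₀ : ∀ n, 0 ≤ f n)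
    (hf₁ : ∀ p : Nat.Primes, f p < 1) (N : ℕ) :
    ∑ n ∈ range N, f n ≤ ∏ p ∈ N.primesBelow, (1 - f p)⁻¹ := by
  have hlt {p : ℕ} (hp : p.Prime) : ‖(f : ℕ →* ℝ) p‖ < 1 := by
    simpa [Real.norm_of_nonneg (hf₀ p)] using hf₁ ⟨p, hp⟩
  have hvanish (n) (hn : n ∈ range N) (hns : n ∉ Set.range ((↑) : N.smoothNumbers → ℕ)) :
      f n = 0 := by
    obtain rfl : n = 0 := by
      by_contra h0
      exact hns ⟨⟨n, Nat.mem_smoothNumbers_of_lt (Nat.pos_of_ne_zero h0) (mem_range.mp hn)⟩, rfl⟩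
    exact map_zero f
  rw [← sum_preimage _ _ Subtype.val_injective.injOn _ hvanish]
  exact sum_le_hasSum _ (fun m _ ↦ hf₀ m)
    (summable_and_hasSum_smoothNumbers_prod_primesBelow_geometric hlt N).2

theorem summable_norm_of_norm_prime_le {F : Type*} [NormedDivisionRing F] {f : ℕ →*₀ F}
    {a : ℝ} (ha : a < 1) (hfa : ∀ p : Nat.Primes, ‖f p‖ ≤ a)
    (hsum : Summable fun p : Nat.Primes ↦ ‖f p‖) :
    Summable (‖f ·‖) :=
  summable_of_sum_range_le (fun n ↦ norm_nonneg (f n)) fun N ↦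
    (sum_range_le_prod_primesBelow_inv_one_sub (f := normHom.comp f) (fun n ↦ norm_nonneg (f n))
      (fun p ↦ (hfa p).trans_lt ha) N).trans
    (prod_primesBelow_inv_one_sub_le_exp ha (fun p ↦ norm_nonneg (f p)) hfa hsum N)

@[simps]
def powCardFactorsMul {M : Type*} [CommMonoidWithZero M] (c : M) (g : ℕ →*₀ M) : ℕ →*₀ M where
  toFun n := c ^ Ω n * g n
  map_zero' := by simp
  map_one' := by simp
  map_mul' m n := by
    rcases eq_or_ne m 0 with rfl | hm
    · simp
    rcases eq_or_ne n 0 with rfl | hn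
    · simp
    rw [cardFactors_mul hm hn, pow_add, map_mul, mul_mul_mul_comm]

lemma two_mul_two_rpow_neg_lt_one {σ : ℝ} (hσ : 1 < σ) : 2 * (2 : ℝ) ^ (-σ) < 1 := by
  have := Real.rpow_lt_rpow_of_exponent_lt one_lt_two (neg_lt_neg hσ)
  rw [Real.rpow_neg_one] at this
  linarith

theorem dirichlet_series_W (s : ℂ) (hs : 1 < s.re) :
    Summable (fun n : ℕ => ‖(-2 : ℂ) ^ (Ω n) / (n : ℂ) ^ s‖) ∧
    Multipliable (fun p : Nat.Primes => (1 + 2 * ((p : ℕ) : ℂ) ^ (-s))⁻¹) ∧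
    ∑' n : ℕ, (-2 : ℂ) ^ (Ω n) / (n : ℂ) ^ s =
      ∏' p : Nat.Primes, (1 + 2 * ((p : ℕ) : ℂ) ^ (-s))⁻¹ := by
  set F := powCardFactorsMul (-2 : ℂ) (riemannZetaSummandHom (ne_zero_of_one_lt_re hs))
  have hF (n : ℕ) : F n = (-2 : ℂ) ^ Ω n / (n : ℂ) ^ s := by
    simp [F, riemannZetaSummandHom, cpow_neg, div_eq_mul_inv]
  have hFp (p : Nat.Primes) : 1 - F p = 1 + 2 * ((p : ℕ) : ℂ) ^ (-s) := by
    simp [F, riemannZetaSummandHom, cardFactors_apply_prime p.prop]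
  have hnorm (p : Nat.Primes) : ‖F p‖ = 2 * (p : ℝ) ^ (-s.re) := by
    simp [F, riemannZetaSummandHom, cardFactors_apply_prime p.prop,
      norm_natCast_cpow_of_pos p.prop.pos]
  have hsum : Summable (‖F ·‖) := by
    refine summable_norm_of_norm_prime_le (two_mul_two_rpow_neg_lt_one hs) (fun p ↦ ?_) ?_
    · rw [hnorm]
      have hp : (2 : ℝ) ≤ (p : ℕ) := mod_cast p.prop.two_le
      exact mul_le_mul_of_nonneg_left
        (Real.rpow_le_rpow_of_nonpos two_pos hp (by linarith)) zero_le_two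
    · simpa only [hnorm] using (Nat.Primes.summable_rpow.mpr (neg_lt_neg hs)).mul_left 2
  have hprod := eulerProduct_completely_multiplicative_hasProd hsum
  simp only [hFp] at hprod
  simp only [hF] at hsum hprod
  exact ⟨hsum, hprod.multipliable, hprod.tprod_eq.symm⟩
end
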